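/- arXiv:2403.09697 — 7 statements merged into one kernel-verified Lean document; each statement's English description precedes it below -/
import Mathlib

section
/- Let q be an integer with q ≥ 2 and let z be a real number with 0 < z < π. Then the sequence of partial products n ↦ ∏_{k=0}^{n-1} (1/q) · tan(z·q^{-k}/2) · cot(z·q^{-k-1}/2) converges, as n → ∞, to 2·tan(z/2)/z. -/
/-! With `x k = a / q ^ k` and `g x = tan x / x`, the `k`-th factor equals
`g (x k) / g (x (k + 1))`, so the partial products telescope to `g a / g (x n)`. Since `x n → 0`
and `g x → 1` as `x → 0` (the derivative of `tan` at `0`), the limit is `g a`; here `a = z / 2`. -/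

open Real Finset Filter Topology

theorem Finset.prod_range_div_succ_of_ne_zero {G₀ : Type*} [CommGroupWithZero G₀]
    {f : ℕ → G₀} (hf : ∀ i, f i ≠ 0) (n : ℕ) : ∏ i ∈ range n, f i / f (i + 1) = f 0 / f n := by
  induction n with
  | zero => simp [div_self (hf 0)]
  | succ n ih => rw [prod_range_succ, ih, div_mul_div_cancel₀ (hf n)]

namespace Real

theorem tendsto_tan_div_self_nhdsNE : Tendsto (fun x => tan x / x) (𝓝[≠] 0) (𝓝 1) := by
  have h : HasDerivAt tan 1 0 := by simpa using hasDerivAt_tan (x := 0) (by simp)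
  refine (hasDerivAt_iff_tendsto_slope.mp h).congr fun x => ?_
  simp [slope_def_field]

theorem one_div_mul_tan_mul_cot_div {x : ℝ} (hx : x ≠ 0) (q : ℝ) :
    1 / q * tan x * cot (x / q) = (tan x / x) / (tan (x / q) / (x / q)) := by
  rw [← inv_inv (cot _), cot_inv_eq_tan]
  field_simp

theorem tendsto_prod_tan_mul_cot {q a : ℝ} (hq : 1 < q) (ha₀ : 0 < a) (ha : a < π / 2) :
    Tendsto (fun n : ℕ => ∏ k ∈ range n, 1 / q * tan (a / q ^ k) * cot (a / q ^ k / q))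
      atTop (𝓝 (tan a / a)) := by
  set x : ℕ → ℝ := fun k => a / q ^ k with hx
  change Tendsto (fun n => ∏ k ∈ range n, 1 / q * tan (x k) * cot (x k / q)) _ _
  have hx_pos (k : ℕ) : 0 < x k := by positivity
  have hx_lt (k : ℕ) : x k < π / 2 :=
    (div_le_self ha₀.le (one_le_pow₀ hq.le)).trans_lt ha
  have hx_lim : Tendsto x atTop (𝓝[≠] 0) :=
    tendsto_nhdsWithin_iff.mpr ⟨tendsto_const_nhds.div_atTop
      (tendsto_pow_atTop_atTop_of_one_lt hq), .of_forall fun k => (hx_pos k).ne'⟩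
  set g : ℕ → ℝ := fun k => tan (x k) / x k with hg
  have hg_ne (k : ℕ) : g k ≠ 0 :=
    (div_pos (tan_pos_of_pos_of_lt_pi_div_two (hx_pos k) (hx_lt k)) (hx_pos k)).ne'
  have hterm (k : ℕ) : 1 / q * tan (x k) * cot (x k / q) = g k / g (k + 1) := by
    have hx_succ : x k / q = x (k + 1) := by simp only [hx, pow_succ, div_div]
    rw [one_div_mul_tan_mul_cot_div (hx_pos k).ne', hx_succ]
  simp only [hterm, prod_range_div_succ_of_ne_zero hg_ne]
  have hg0 : g 0 = tan a / a := by simp [hg, hx]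
  rw [← div_one (tan a / a), ← hg0]
  exact tendsto_const_nhds.div (tendsto_tan_div_self_nhdsNE.comp hx_lim) one_ne_zero

end Real

theorem tan_infinite_product (q : ℤ) (hq : 2 ≤ q) (z : ℝ) (hz : 0 < z)
    (hz' : z < Real.pi) :
    Filter.Tendsto
      (fun n : ℕ => ∏ k ∈ Finset.range n,
        (1 / (q : ℝ)) * Real.tan (z * (q : ℝ) ^ (-(k : ℤ)) / 2) *
          Real.cot (z * (q : ℝ) ^ (-(k : ℤ) - 1) / 2))
      Filter.atTop (𝓝 (2 * Real.tan (z / 2) / z)) := by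
  have hq₀ : (q : ℝ) ≠ 0 := by positivity
  have hzk (k : ℕ) : z * (q : ℝ) ^ (-(k : ℤ)) / 2 = z / 2 / (q : ℝ) ^ k := by
    rw [zpow_neg, zpow_natCast]; ring
  have hzk' (k : ℕ) : z * (q : ℝ) ^ (-(k : ℤ) - 1) / 2 = z / 2 / (q : ℝ) ^ k / q := by
    rw [zpow_sub_one₀ hq₀, zpow_neg, zpow_natCast]; ring
  have hlimit : tan (z / 2) / (z / 2) = 2 * tan (z / 2) / z := by field_simp
  simp only [hzk, hzk', ← hlimit]
  exact tendsto_prod_tan_mul_cot (by exact_mod_cast hq) (by positivity) (by linarith)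
end

section
/- Let q be an integer with q ≥ 2 and let z be a real number with 0 < z < π. Then the sequence of partial products n ↦ ∏_{k=0}^{n-1} [ 2^{-(q-1)·q^k} · q^{-q^k·(k·(q-1)+q)} · z^{(q-1)·q^k} · (tan(z·q^{-k-1}/2))^{-q^{k+1}} · (tan(z·q^{-k}/2))^{q^k} ] converges, as n → ∞, to 2·tan(z/2)/z. -/
open Real Finset Filter Topology

/-!
With `x_k = z q^{-k} / 2`, the `k`-th factor is `D_{k+1} / D_k` for `D_k = (x_k / tan x_k)^{q^k}`,
because `x_{k+1}^{q^{k+1}} / x_k^{q^k}` is exactly the product of the powers of `2`, `q` and `z`.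
So the partial products telescope to `D_n / D_0`, and `D_0 = (z/2) / tan (z/2)`.
Finally `log D_n = -q^n log (tan x_n / x_n) → 0`, since `log (tan x / x) = O(x^2)` while
`q^n x_n = z / 2` is constant.
-/

lemma tan_le_mul_one_add_sq {x : ℝ} (hx : 0 < x) (hx1 : x ≤ 1) : tan x ≤ x * (1 + x ^ 2) := by
  have hcos : 1 - x ^ 2 / 2 ≤ cos x := one_sub_sq_div_two_le_cos
  have hcos_pos : 0 < cos x := by nlinarith
  rw [tan_eq_sin_div_cos, div_le_iff₀ hcos_pos]
  calc sin x ≤ x := sin_le hx.le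
    _ ≤ x * (1 + x ^ 2) * (1 - x ^ 2 / 2) := by
      nlinarith [mul_nonneg (pow_pos hx 3).le (sub_nonneg.2 (pow_le_one₀ hx.le hx1 : x ^ 2 ≤ 1))]
    _ ≤ x * (1 + x ^ 2) * cos x := by gcongr

lemma tendsto_log_tan_div_self_div_self :
    Tendsto (fun x => log (tan x / x) / x) (𝓝[>] 0) (𝓝 0) := by
  have hπ : (1 : ℝ) < π / 2 := by linarith [pi_gt_three]
  refine tendsto_of_tendsto_of_tendsto_of_le_of_le' tendsto_const_nhds
    (tendsto_nhdsWithin_of_tendsto_nhds tendsto_id) ?_ ?_ <;>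
    filter_upwards [Ioo_mem_nhdsGT zero_lt_one] with x ⟨hx0, hx1⟩
  · have hx_le_tan : x ≤ tan x := le_tan hx0.le (by linarith)
    exact div_nonneg (log_nonneg ((one_le_div hx0).2 hx_le_tan)) hx0.le
  · have htan_pos : 0 < tan x := tan_pos_of_pos_of_lt_pi_div_two hx0 (by linarith)
    rw [div_le_iff₀ hx0, id]
    calc log (tan x / x) ≤ tan x / x - 1 := log_le_sub_one_of_pos (div_pos htan_pos hx0)
      _ ≤ x * x := by
        rw [div_sub_one hx0.ne', div_le_iff₀ hx0]
        nlinarith [tan_le_mul_one_add_sq hx0 hx1.le]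

noncomputable def halfAngle (q : ℤ) (z : ℝ) (k : ℕ) : ℝ := z * (q : ℝ) ^ (-(k : ℤ)) / 2

noncomputable def logTanRatio (q : ℤ) (z : ℝ) (k : ℕ) : ℝ :=
  (q : ℝ) ^ k * log (tan (halfAngle q z k) / halfAngle q z k)

section

variable {q : ℤ} {z : ℝ}

lemma halfAngle_eq_div (k : ℕ) : halfAngle q z k = z / 2 / (q : ℝ) ^ k := by
  rw [halfAngle, zpow_neg, zpow_natCast]
  ring

lemma halfAngle_succ (k : ℕ) : halfAngle q z (k + 1) = z * (q : ℝ) ^ (-(k : ℤ) - 1) / 2 := by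
  rw [halfAngle]
  push_cast
  ring_nf

lemma halfAngle_pos (hq : 0 < q) (hz : 0 < z) (k : ℕ) : 0 < halfAngle q z k := by
  rw [halfAngle_eq_div]
  have : (0 : ℝ) < q := by exact_mod_cast hq
  positivity

lemma tan_halfAngle_pos (hq : 1 ≤ q) (hz : 0 < z) (hz' : z < π) (k : ℕ) :
    0 < tan (halfAngle q z k) := by
  have hq' : (1 : ℝ) ≤ q := by exact_mod_cast hq
  have hle : halfAngle q z k ≤ z / 2 := by
    rw [halfAngle_eq_div]
    exact div_le_self (by positivity) (one_le_pow₀ hq')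
  exact tan_pos_of_pos_of_lt_pi_div_two (halfAngle_pos hq hz k) (by linarith)

lemma log_halfAngle (hq : 0 < q) (hz : 0 < z) (k : ℕ) :
    log (halfAngle q z k) = log z - k * log q - log 2 := by
  have : (0 : ℝ) < q := by exact_mod_cast hq
  rw [halfAngle_eq_div, log_div (by positivity) (by positivity), log_div hz.ne' two_ne_zero,
    log_pow]
  ring

lemma factor_eq_exp_logTanRatio_sub (hq : 0 < q) (hz : 0 < z) (k : ℕ)
    (htan : 0 < tan (halfAngle q z k)) (htan' : 0 < tan (halfAngle q z (k + 1))) :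
    (2 : ℝ) ^ (-((q - 1) * q ^ k)) *
        (q : ℝ) ^ (-(q ^ k * ((k : ℤ) * (q - 1) + q))) *
        z ^ ((q - 1) * q ^ k) *
        tan (z * (q : ℝ) ^ (-(k : ℤ) - 1) / 2) ^ (-q ^ (k + 1)) *
        tan (z * (q : ℝ) ^ (-(k : ℤ)) / 2) ^ (q ^ k) =
      exp (logTanRatio q z k - logTanRatio q z (k + 1)) := by
  have hq' : (0 : ℝ) < q := by exact_mod_cast hq
  rw [← halfAngle_succ, ← halfAngle]
  rw [← exp_log (by positivity :
    (0 : ℝ) < 2 ^ (-((q - 1) * q ^ k)) * (q : ℝ) ^ (-(q ^ k * ((k : ℤ) * (q - 1) + q))) *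
      z ^ ((q - 1) * q ^ k) * tan (halfAngle q z (k + 1)) ^ (-q ^ (k + 1)) *
      tan (halfAngle q z k) ^ (q ^ k))]
  congr 1
  rw [log_mul (by positivity) (by positivity), log_mul (by positivity) (by positivity),
    log_mul (by positivity) (by positivity), log_mul (by positivity) (by positivity),
    log_zpow, log_zpow, log_zpow, log_zpow, log_zpow, logTanRatio, logTanRatio,
    log_div htan.ne' (halfAngle_pos hq hz k).ne',
    log_div htan'.ne' (halfAngle_pos hq hz (k + 1)).ne', log_halfAngle hq hz,
    log_halfAngle hq hz]
  push_cast
  ring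

lemma tendsto_halfAngle (hq : 1 < q) (hz : 0 < z) :
    Tendsto (halfAngle q z) atTop (𝓝[>] 0) := by
  have hq' : (1 : ℝ) < q := by exact_mod_cast hq
  refine tendsto_nhdsWithin_iff.2 ⟨?_, Eventually.of_forall (halfAngle_pos (by omega) hz)⟩
  have h := (tendsto_inv_atTop_zero.comp (tendsto_pow_atTop_atTop_of_one_lt hq')).const_mul (z / 2)
  rw [mul_zero] at h
  refine h.congr fun k => ?_
  rw [halfAngle_eq_div]
  rfl

lemma tendsto_logTanRatio (hq : 1 < q) (hz : 0 < z) :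
    Tendsto (logTanRatio q z) atTop (𝓝 0) := by
  have h := (tendsto_log_tan_div_self_div_self.comp (tendsto_halfAngle hq hz)).const_mul (z / 2)
  rw [mul_zero] at h
  refine h.congr fun k => ?_
  have hqk : (q : ℝ) ^ k ≠ 0 := pow_ne_zero _ (by exact_mod_cast (by omega : q ≠ 0))
  simp only [Function.comp_apply, logTanRatio, halfAngle_eq_div]
  field_simp

lemma exp_logTanRatio_zero (hz : 0 < z) (htan : 0 < tan (z / 2)) :
    exp (logTanRatio q z 0) = 2 * tan (z / 2) / z := by
  have h0 : halfAngle q z 0 = z / 2 := by simp [halfAngle_eq_div]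
  rw [logTanRatio, h0, pow_zero, one_mul, exp_log (by positivity)]
  field_simp

end

theorem tan_zpow_infinite_product (q : ℤ) (hq : 2 ≤ q) (z : ℝ) (hz : 0 < z)
    (hz' : z < Real.pi) :
    Filter.Tendsto
      (fun n : ℕ => ∏ k ∈ Finset.range n,
        (2 : ℝ) ^ (-((q - 1) * q ^ k)) *
          (q : ℝ) ^ (-(q ^ k * ((k : ℤ) * (q - 1) + q))) *
          z ^ ((q - 1) * q ^ k) *
          Real.tan (z * (q : ℝ) ^ (-(k : ℤ) - 1) / 2) ^ (-q ^ (k + 1)) *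
          Real.tan (z * (q : ℝ) ^ (-(k : ℤ)) / 2) ^ (q ^ k))
      Filter.atTop (𝓝 (2 * Real.tan (z / 2) / z)) := by
  have htan := tan_halfAngle_pos (by omega : 1 ≤ q) hz hz'
  have hprod : ∀ n : ℕ, ∏ k ∈ range n,
      (2 : ℝ) ^ (-((q - 1) * q ^ k)) *
        (q : ℝ) ^ (-(q ^ k * ((k : ℤ) * (q - 1) + q))) *
        z ^ ((q - 1) * q ^ k) *
        tan (z * (q : ℝ) ^ (-(k : ℤ) - 1) / 2) ^ (-q ^ (k + 1)) *
        tan (z * (q : ℝ) ^ (-(k : ℤ)) / 2) ^ (q ^ k) =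
      exp (logTanRatio q z 0 - logTanRatio q z n) := fun n => by
    rw [prod_congr rfl fun k _ =>
        factor_eq_exp_logTanRatio_sub (by omega) hz k (htan k) (htan (k + 1)),
      ← exp_sum, sum_range_sub']
  have hlim := (continuous_exp.tendsto _).comp
    ((tendsto_const_nhds (x := logTanRatio q z 0)).sub (tendsto_logTanRatio (by omega : 1 < q) hz))
  rw [sub_zero, exp_logTanRatio_zero hz (by simpa [halfAngle_eq_div] using htan 0)] at hlim
  exact hlim.congr fun n => (hprod n).symm
end

section
/- For every integer n ≥ 2, the sequence of partial products N ↦ ∏_{k=0}^{N-1} (1/2) · tan(π·2^{-k-1}/n) · cot(π·2^{-k-2}/n) converges, as N → ∞, to 2n·tan(π/(2n))/π. -/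
/-! With `g k = 2 ^ k * tan (x / 2 ^ k)` the `k`-th factor is `g k / g (k + 1)`, so the partial
products telescope to `g 0 / g N = tan x / g N`; and `g N → x` because `tan` has slope `1` at `0`.
Here `x = π / (2 n)`. -/

open Real Finset Filter Topology

theorem Finset.prod_range_div'_of_ne_zero {G₀ : Type*} [CommGroupWithZero G₀] {f : ℕ → G₀}
    (hf : ∀ k, f k ≠ 0) (n : ℕ) : ∏ k ∈ range n, f k / f (k + 1) = f 0 / f n := by
  induction n with
  | zero => simp [hf 0]
  | succ n ih => rw [prod_range_succ, ih, div_mul_div_cancel₀ (hf n)]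

theorem Real.tendsto_two_pow_mul_tan_div_two_pow (x : ℝ) :
    Tendsto (fun N : ℕ => 2 ^ N * tan (x / 2 ^ N)) atTop (𝓝 x) := by
  have hderiv : HasDerivAt (fun t => tan (t * x)) x 0 := by
    simpa [Function.comp_def] using
      (hasDerivAt_tan (by simp : cos (0 * x) ≠ 0)).comp (0 : ℝ) (hasDerivAt_mul_const x)
  have hscale : Tendsto (fun N : ℕ => (2⁻¹ : ℝ) ^ N) atTop (𝓝[≠] 0) :=
    (tendsto_pow_atTop_nhdsWithin_zero_of_lt_one (by norm_num) (by norm_num)).mono_right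
      (nhdsWithin_mono _ fun _ h => ne_of_gt h)
  convert (hasDerivAt_iff_tendsto_slope_zero.mp hderiv).comp hscale using 2 with N
  simp [div_eq_inv_mul]

theorem Real.tendsto_prod_half_mul_tan_mul_cot {x : ℝ} (hx₀ : 0 < x) (hx : x < π / 2) :
    Tendsto (fun N : ℕ => ∏ k ∈ range N, 1 / 2 * tan (x / 2 ^ k) * cot (x / 2 ^ (k + 1)))
      atTop (𝓝 (tan x / x)) := by
  set g : ℕ → ℝ := fun k => 2 ^ k * tan (x / 2 ^ k)
  have hg : ∀ k, g k ≠ 0 := fun k => by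
    have h₀ : 0 < x / 2 ^ k := by positivity
    have h₁ : x / 2 ^ k < π / 2 :=
      (div_le_self hx₀.le (one_le_pow₀ one_le_two)).trans_lt hx
    exact (mul_pos (by positivity) (tan_pos_of_pos_of_lt_pi_div_two h₀ h₁)).ne'
  have hfactor : ∀ k, 1 / 2 * tan (x / 2 ^ k) * cot (x / 2 ^ (k + 1)) = g k / g (k + 1) :=
    fun k => by
      rw [← tan_inv_eq_cot]
      have := hg (k + 1)
      simp only [g, pow_succ] at this ⊢
      field_simp
  simp_rw [hfactor, prod_range_div'_of_ne_zero hg]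
  convert (tendsto_const_nhds (x := tan x)).div
    (tendsto_two_pow_mul_tan_div_two_pow x) hx₀.ne' using 2
  simp [g]

theorem tan_product_pi_div_n (n : ℕ) (hn : 2 ≤ n) :
    Filter.Tendsto
      (fun N : ℕ => ∏ k ∈ Finset.range N,
        (1 / 2 : ℝ) * Real.tan (Real.pi * (2 : ℝ) ^ (-(k : ℤ) - 1) / n) *
          Real.cot (Real.pi * (2 : ℝ) ^ (-(k : ℤ) - 2) / n))
      Filter.atTop (𝓝 (2 * n * Real.tan (Real.pi / (2 * n)) / Real.pi)) := by
  have hn' : (2 : ℝ) ≤ n := by exact_mod_cast hn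
  have hargument : ∀ j : ℕ, π * (2 : ℝ) ^ (-(j : ℤ) - 1) / n = π / (2 * n) / 2 ^ j := fun j => by
    rw [show -(j : ℤ) - 1 = -((j + 1 : ℕ) : ℤ) by push_cast; ring, zpow_neg, zpow_natCast]
    field_simp
    ring
  have hexponent : ∀ k : ℕ, -(k : ℤ) - 2 = -((k + 1 : ℕ) : ℤ) - 1 := fun k => by push_cast; ring
  have hlim := tendsto_prod_half_mul_tan_mul_cot (x := π / (2 * n)) (by positivity)
    (div_lt_div_of_pos_left pi_pos two_pos (by linarith))
  simp_rw [hexponent, hargument]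
  convert hlim using 2
  field_simp
end

section
/- The sequence of partial products N ↦ ∏_{k=0}^{N-1} (1/2) · tan(π·2^{-k-2}) · cot(π·2^{-k-3}) converges, as N → ∞, to 4/π. -/
open Real Finset Filter Topology

/-! Since `tan = cot⁻¹`, the `k`-th factor is `f (k + 1) / f k` with `f k = cot (x / 2 ^ k) / 2 ^ k`,
so the partial products telescope to `f N / cot x`. As `y cot y → 1` when `y → 0`, `f N → 1 / x`,
and the product tends to `tan x / x`; at `x = π / 4` this is `4 / π`. -/

theorem Finset.prod_range_div_of_ne_zero {G : Type*} [CommGroupWithZero G] (f : ℕ → G)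
    (hf : ∀ k, f k ≠ 0) (n : ℕ) : ∏ i ∈ range n, f (i + 1) / f i = f n / f 0 := by
  induction n with
  | zero => simp [div_self (hf 0)]
  | succ n ih => rw [prod_range_succ, ih, mul_comm, div_mul_div_cancel₀ (hf n)]

namespace Real

theorem cot_pos_of_pos_of_lt_pi_div_two {x : ℝ} (h0x : 0 < x) (hxp : x < π / 2) : 0 < cot x := by
  rw [← tan_inv_eq_cot]
  exact inv_pos.mpr (tan_pos_of_pos_of_lt_pi_div_two h0x hxp)

theorem prod_half_mul_tan_mul_cot_div_two_pow {x : ℝ} (h0x : 0 < x) (hxp : x < π / 2) (N : ℕ) :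
    ∏ k ∈ range N, 1 / 2 * tan (x / 2 ^ k) * cot (x / 2 ^ (k + 1)) =
      cot (x / 2 ^ N) / 2 ^ N / cot x := by
  have hcot : ∀ k : ℕ, cot (x / 2 ^ k) / 2 ^ k ≠ 0 := fun k => by
    have : x / 2 ^ k ≤ x := div_le_self h0x.le (one_le_pow₀ one_le_two)
    exact div_ne_zero (cot_pos_of_pos_of_lt_pi_div_two (by positivity) (by linarith)).ne'
      (by positivity)
  have hfactor : ∀ k : ℕ, 1 / 2 * tan (x / 2 ^ k) * cot (x / 2 ^ (k + 1)) =
      (cot (x / 2 ^ (k + 1)) / 2 ^ (k + 1)) / (cot (x / 2 ^ k) / 2 ^ k) := fun k => by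
    rw [← cot_inv_eq_tan, pow_succ]
    field_simp
  simp_rw [hfactor]
  rw [prod_range_div_of_ne_zero (fun k => cot (x / 2 ^ k) / 2 ^ k) hcot]
  simp

-- `cot y = cos y / (y * sinc y)`, and `sinc` is continuous with `sinc 0 = 1`.
theorem tendsto_cot_div_two_pow_div_two_pow {x : ℝ} (hx : x ≠ 0) :
    Tendsto (fun N : ℕ => cot (x / 2 ^ N) / 2 ^ N) atTop (𝓝 x⁻¹) := by
  have hsmall : Tendsto (fun N : ℕ => x / 2 ^ N) atTop (𝓝 0) := by
    simpa using tendsto_const_nhds.div_atTop (tendsto_pow_atTop_atTop_of_one_lt one_lt_two)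
  have hcont : ContinuousAt (fun y => cos y / sinc y) 0 :=
    continuous_cos.continuousAt.div continuous_sinc.continuousAt (by simp [sinc_zero])
  have hlim := (hcont.tendsto.comp hsmall).div_const x
  simp only [Function.comp_def, cos_zero, sinc_zero, div_one, one_div] at hlim
  refine hlim.congr fun N => ?_
  rw [sinc_of_ne_zero (by positivity), cot_eq_cos_div_sin]
  field_simp

theorem tendsto_prod_half_mul_tan_mul_cot_div_two_pow {x : ℝ} (h0x : 0 < x) (hxp : x < π / 2) :
    Tendsto (fun N : ℕ => ∏ k ∈ range N, 1 / 2 * tan (x / 2 ^ k) * cot (x / 2 ^ (k + 1)))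
      atTop (𝓝 (tan x / x)) := by
  simp_rw [prod_half_mul_tan_mul_cot_div_two_pow h0x hxp]
  convert (tendsto_cot_div_two_pow_div_two_pow h0x.ne').div_const (cot x) using 2
  rw [← cot_inv_eq_tan]
  ring

end Real

theorem pi_mul_two_zpow_neg_sub_two (n : ℕ) : π * (2 : ℝ) ^ (-(n : ℤ) - 2) = π / 4 / 2 ^ n := by
  rw [show -(n : ℤ) - 2 = -((n + 2 : ℕ) : ℤ) by push_cast; ring, zpow_neg, zpow_natCast, pow_add]
  ring

theorem tan_product_four_div_pi :
    Filter.Tendsto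
      (fun N : ℕ => ∏ k ∈ Finset.range N,
        (1 / 2 : ℝ) * Real.tan (Real.pi * (2 : ℝ) ^ (-(k : ℤ) - 2)) *
          Real.cot (Real.pi * (2 : ℝ) ^ (-(k : ℤ) - 3)))
      Filter.atTop (𝓝 (4 / Real.pi)) := by
  have hshift (k : ℕ) : -(k : ℤ) - 3 = -((k + 1 : ℕ) : ℤ) - 2 := by push_cast; ring
  simp_rw [hshift, pi_mul_two_zpow_neg_sub_two]
  convert tendsto_prod_half_mul_tan_mul_cot_div_two_pow (x := π / 4) (by positivity)
    (by linarith [pi_pos]) using 2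
  rw [tan_pi_div_four]
  field_simp
end

section
/- The sequence of partial products N ↦ ∏_{k=0}^{N-1} (1/2) · tan(π·2^{-k-4}) · cot(π·2^{-k-5}) converges, as N → ∞, to (16/π)·√((2-√(2+√2))/(2+√(2+√2))). -/
open Real Finset Filter Topology

/-! With `θ = π / 16`, the `k`-th factor is `g k / g (k + 1)` for `g k = 2 ^ k * tan (θ / 2 ^ k)`,
so the partial products telescope to `tan θ / g N`. Since `tan' 0 = 1`, `g N → θ`, and the limit is
`tan (π / 16) * 16 / π`; the value of `tan (π / 16)` comes from those of `sin` and `cos` at `π / 16`. -/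

namespace Real

lemma cot_mul_tan_of_tan_ne_zero {x : ℝ} (h : tan x ≠ 0) : cot x * tan x = 1 := by
  have hsin : sin x ≠ 0 := fun hs => h (by simp [tan_eq_sin_div_cos, hs])
  have hcos : cos x ≠ 0 := fun hc => h (by simp [tan_eq_sin_div_cos, hc])
  rw [cot_eq_cos_div_sin, tan_eq_sin_div_cos]
  field_simp

lemma tan_div_two_pow_succ_ne_zero {θ : ℝ} (h0 : 0 < θ) (hπ : θ < π) (k : ℕ) :
    tan (θ / 2 ^ (k + 1)) ≠ 0 := by
  have hpow : (2 : ℝ) ≤ 2 ^ (k + 1) := le_self_pow₀ one_le_two k.succ_ne_zero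
  refine (tan_pos_of_pos_of_lt_pi_div_two (by positivity) ?_).ne'
  calc θ / 2 ^ (k + 1) ≤ θ / 2 := div_le_div_of_nonneg_left h0.le two_pos hpow
    _ < π / 2 := by linarith

theorem prod_half_tan_mul_cot_mul_two_pow_tan {θ : ℝ} (h0 : 0 < θ) (hπ : θ < π) (N : ℕ) :
    (∏ k ∈ range N, 1 / 2 * tan (θ / 2 ^ k) * cot (θ / 2 ^ (k + 1))) *
      (2 ^ N * tan (θ / 2 ^ N)) = tan θ := by
  induction N with
  | zero => simp
  | succ N ih =>
    have hcot := cot_mul_tan_of_tan_ne_zero (tan_div_two_pow_succ_ne_zero h0 hπ N)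
    rw [prod_range_succ, ← ih]
    linear_combination (∏ k ∈ range N, 1 / 2 * tan (θ / 2 ^ k) * cot (θ / 2 ^ (k + 1))) *
      2 ^ N * tan (θ / 2 ^ N) * hcot

theorem tendsto_two_pow_mul_tan_div_two_pow_s11 (θ : ℝ) :
    Tendsto (fun N : ℕ => 2 ^ N * tan (θ / 2 ^ N)) atTop (𝓝 θ) := by
  rcases eq_or_ne θ 0 with rfl | hθ
  · simp
  have hslope : Tendsto (fun t => t⁻¹ * tan t) (𝓝[≠] 0) (𝓝 1) := by
    have hderiv : HasDerivAt tan 1 0 := by simpa using hasDerivAt_tan (x := 0) (by simp)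
    simpa using hasDerivAt_iff_tendsto_slope_zero.mp hderiv
  have hto0 : Tendsto (fun N : ℕ => θ / 2 ^ N) atTop (𝓝[≠] 0) := by
    refine tendsto_nhdsWithin_iff.mpr ⟨?_, .of_forall fun N => div_ne_zero hθ (by positivity)⟩
    simpa [div_eq_mul_inv] using
      ((tendsto_pow_atTop_atTop_of_one_lt one_lt_two).inv_tendsto_atTop).const_mul θ
  have hlim := (hslope.comp hto0).const_mul θ
  rw [mul_one] at hlim
  refine hlim.congr fun N => ?_
  simp only [Function.comp_apply]
  field_simp

theorem tan_pi_div_sixteen :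
    tan (π / 16) = √((2 - √(2 + √2)) / (2 + √(2 + √2))) := by
  have h2 : √2 ≤ 2 := by
    nlinarith [sq_sqrt (show (0:ℝ) ≤ 2 by norm_num), sqrt_nonneg 2]
  have h3 : √(2 + √2) ≤ 2 := by
    nlinarith [sq_sqrt (show (0:ℝ) ≤ 2 + √2 by positivity), sqrt_nonneg (2 + √2)]
  have hnum : (0:ℝ) ≤ 2 - √(2 + √2) := by linarith
  have hb : (0:ℝ) < √(2 + √(2 + √2)) := sqrt_pos.mpr (by positivity)
  rw [tan_eq_sin_div_cos, sin_pi_div_sixteen, cos_pi_div_sixteen, sqrt_div hnum]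
  field_simp

end Real

theorem tan_product_pi_div_eight :
    Filter.Tendsto
      (fun N : ℕ => ∏ k ∈ Finset.range N,
        (1 / 2 : ℝ) * Real.tan (Real.pi * (2 : ℝ) ^ (-(k : ℤ) - 4)) *
          Real.cot (Real.pi * (2 : ℝ) ^ (-(k : ℤ) - 5)))
      Filter.atTop
      (𝓝 (16 / Real.pi *
        Real.sqrt ((2 - Real.sqrt (2 + Real.sqrt 2)) / (2 + Real.sqrt (2 + Real.sqrt 2))))) := by
  have h0 : 0 < π / 16 := by positivity
  have hπ : π / 16 < π := by linarith [pi_pos]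
  have htan : tan (π / 16) ≠ 0 := (tan_pos_of_pos_of_lt_pi_div_two h0 (by linarith)).ne'
  have hclosed (N : ℕ) : ∏ k ∈ range N, 1 / 2 * tan (π * (2 : ℝ) ^ (-(k : ℤ) - 4)) *
      cot (π * (2 : ℝ) ^ (-(k : ℤ) - 5)) = tan (π / 16) / (2 ^ N * tan (π / 16 / 2 ^ N)) := by
    have h := prod_half_tan_mul_cot_mul_two_pow_tan h0 hπ N
    have hargs (k : ℕ) : π * (2 : ℝ) ^ (-(k : ℤ) - 4) = π / 16 / 2 ^ k ∧
        π * (2 : ℝ) ^ (-(k : ℤ) - 5) = π / 16 / 2 ^ (k + 1) := by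
      simp only [zpow_sub₀ (two_ne_zero (α := ℝ)), zpow_neg, zpow_natCast]
      constructor <;> norm_num <;> ring
    simp only [hargs]
    exact eq_div_of_mul_eq (right_ne_zero_of_mul (h.symm ▸ htan)) h
  rw [← tan_pi_div_sixteen, show 16 / π * tan (π / 16) = tan (π / 16) / (π / 16) by ring]
  exact (tendsto_const_nhds.div (tendsto_two_pow_mul_tan_div_two_pow_s11 _) h0.ne').congr
    fun N => (hclosed N).symm
end

section
/- For every nonzero real number z, the sequence of partial products N ↦ ∏_{k=0}^{N-1} cos(2^{-k-1}·z) converges, as N → ∞, to sin(z)/z. -/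
open Real Finset Filter Topology

/-!
Iterating the double-angle formula `sin x = 2 sin (x/2) cos (x/2)`, written as
`sinc x = sinc (x/2) cos (x/2)`, gives `sinc x = sinc (x / 2^n) ∏_{k<n} cos (x / 2^(k+1))`.
Since `sinc` is continuous with `sinc 0 = 1`, the first factor tends to `1`.
-/

namespace Real

theorem sinc_eq_sinc_half_mul_cos_half (x : ℝ) : sinc x = sinc (x / 2) * cos (x / 2) := by
  rcases eq_or_ne x 0 with rfl | hx
  · simp
  · have hx2 : x / 2 ≠ 0 := div_ne_zero hx two_ne_zero
    rw [sinc_of_ne_zero hx, sinc_of_ne_zero hx2]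
    calc sin x / x = 2 * sin (x / 2) * cos (x / 2) / x := by
          rw [← sin_two_mul, mul_div_cancel₀ x two_ne_zero]
      _ = sin (x / 2) / (x / 2) * cos (x / 2) := by field_simp

theorem sinc_eq_sinc_div_two_pow_mul_prod_cos (x : ℝ) (n : ℕ) :
    sinc x = sinc (x / 2 ^ n) * ∏ k ∈ range n, cos (x / 2 ^ (k + 1)) := by
  induction n with
  | zero => simp
  | succ n ih =>
    rw [ih, sinc_eq_sinc_half_mul_cos_half (x / 2 ^ n), prod_range_succ, div_div, ← pow_succ]
    ring

theorem tendsto_sinc_div_two_pow (x : ℝ) :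
    Tendsto (fun n : ℕ => sinc (x / 2 ^ n)) atTop (𝓝 1) := by
  have h : Tendsto (fun n : ℕ => x / 2 ^ n) atTop (𝓝 0) := by
    simpa using tendsto_const_nhds.div_atTop (tendsto_pow_atTop_atTop_of_one_lt one_lt_two)
  rw [← sinc_zero]
  exact (continuous_sinc.tendsto 0).comp h

theorem tendsto_prod_range_cos_div_two_pow (x : ℝ) :
    Tendsto (fun n : ℕ => ∏ k ∈ range n, cos (x / 2 ^ (k + 1))) atTop (𝓝 (sinc x)) := by
  have h : Tendsto (fun n : ℕ => sinc x / sinc (x / 2 ^ n)) atTop (𝓝 (sinc x / 1)) :=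
    tendsto_const_nhds.div (tendsto_sinc_div_two_pow x) one_ne_zero
  rw [div_one] at h
  refine h.congr' ?_
  filter_upwards [(tendsto_sinc_div_two_pow x).eventually_ne one_ne_zero] with n hn
  rw [sinc_eq_sinc_div_two_pow_mul_prod_cos x n, mul_div_cancel_left₀ _ hn]

end Real

theorem euler_cos_product (z : ℝ) (hz : z ≠ 0) :
    Filter.Tendsto
      (fun N : ℕ => ∏ k ∈ Finset.range N, Real.cos ((2 : ℝ) ^ (-(k : ℤ) - 1) * z))
      Filter.atTop (𝓝 (Real.sin z / z)) := by
  have h_arg (k : ℕ) : (2 : ℝ) ^ (-(k : ℤ) - 1) * z = z / 2 ^ (k + 1) := by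
    rw [← neg_add', zpow_neg, ← Nat.cast_succ, zpow_natCast, inv_mul_eq_div]
  simp_rw [h_arg, ← sinc_of_ne_zero hz]
  exact tendsto_prod_range_cos_div_two_pow z
end

section
/- Let q be an integer with q ≥ 2 and let z be a real number with 0 < z < π. Then the sequence of partial products N ↦ ∏_{k=0}^{N-1} sin(z·q^{-k}) / (q·sin(z·q^{-k-1})) converges, as N → ∞, to sin(z)/z. -/
open Real Finset Filter Topology

/-!
The arguments `z / q ^ k` lie in `(0, π)`, so no sine vanishes and the partial product telescopes to
`sin z / (q ^ N * sin (z / q ^ N))`, and `x * sin (z / x) = z * sinc (z / x) → z` as `x → ∞`.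
-/

theorem prod_range_div_mul_succ {K : Type*} [Field K] (f : ℕ → K) (c : K)
    (hf : ∀ k, f k ≠ 0) (N : ℕ) :
    ∏ k ∈ range N, f k / (c * f (k + 1)) = f 0 / (c ^ N * f N) := by
  induction N with
  | zero => simp [hf 0]
  | succ n ih =>
    rw [prod_range_succ, ih, pow_succ]
    field_simp [hf n]

theorem tendsto_mul_sin_div_atTop (z : ℝ) :
    Tendsto (fun x : ℝ => x * sin (z / x)) atTop (𝓝 z) := by
  have hsinc : Tendsto (fun x : ℝ => z * sinc (z / x)) atTop (𝓝 z) := by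
    simpa [sinc_zero] using
      ((continuous_sinc.tendsto 0).comp (tendsto_const_nhds.div_atTop tendsto_id)).const_mul z
  refine hsinc.congr' ?_
  filter_upwards [eventually_ne_atTop 0] with x hx
  by_cases hz : z = 0
  · simp [hz]
  · rw [sinc_of_ne_zero (div_ne_zero hz hx)]
    field_simp

theorem generalized_viete_sinc (q : ℤ) (hq : 2 ≤ q) (z : ℝ) (hz : 0 < z)
    (hz' : z < Real.pi) :
    Filter.Tendsto
      (fun N : ℕ => ∏ k ∈ Finset.range N,
        Real.sin (z * (q : ℝ) ^ (-(k : ℤ))) / ((q : ℝ) * Real.sin (z * (q : ℝ) ^ (-(k : ℤ) - 1))))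
      Filter.atTop (𝓝 (Real.sin z / z)) := by
  have hq1 : (1 : ℝ) < q := by exact_mod_cast (show (1 : ℤ) < q by omega)
  set f : ℕ → ℝ := fun k => sin (z / (q : ℝ) ^ k) with hf_def
  have hf : ∀ k, f k ≠ 0 := fun k =>
    (sin_pos_of_pos_of_lt_pi (by positivity)
      ((div_le_self hz.le (one_le_pow₀ hq1.le)).trans_lt hz')).ne'
  have hterm : ∀ k : ℕ, sin (z * (q : ℝ) ^ (-(k : ℤ))) / (q * sin (z * (q : ℝ) ^ (-(k : ℤ) - 1)))
      = f k / (q * f (k + 1)) := by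
    intro k
    rw [show -(k : ℤ) - 1 = -((k + 1 : ℕ) : ℤ) by push_cast; ring]
    simp only [hf_def, zpow_neg, zpow_natCast, div_eq_mul_inv]
  simp_rw [hterm, prod_range_div_mul_succ f q hf]
  have hden : Tendsto (fun N : ℕ => (q : ℝ) ^ N * f N) atTop (𝓝 z) :=
    (tendsto_mul_sin_div_atTop z).comp (tendsto_pow_atTop_atTop_of_one_lt hq1)
  have hf0 : f 0 = sin z := by simp [hf_def]
  rw [hf0]
  exact tendsto_const_nhds.div hden hz.ne'
end
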